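/- Let T ∈ {0,1} a.s., X a random variable, π₀(X) = E[T | X], and let f₀(X, t) = E[Y | X, T = t] be given by measurable functions f₀(·, 0), f₀(·, 1) so that E[Y | X, T] = f₀(X, T) = T·f₀(X,1) + (1-T)·f₀(X,0). Suppose the treatment effect is homogeneous: f₀(x, 1) - f₀(x, 0) = ψ₀ for all x, and E[π₀(X)(1 - π̂(X))] ≠ 0 for a measurable function π̂. Then E[(T - π̂(X))(Y - f̂(X))] / E[T(T - π̂(X))] = ψ₀ + E[(π₀(X) - π̂(X))(f₀(X,0) - f̂(X))] / E[π₀(X)(1 - π̂(X))], for any measurable f̂. In particular, if π̂ = π₀ or f̂ = f₀(·, 0), the estimand equals ψ₀ exactly. -/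

import Mathlib

open MeasureTheory

private lemma zero_integral {Ω : Type*} {mΩ : MeasurableSpace Ω} {μ : Measure Ω}
    [IsProbabilityMeasure μ] {m : MeasurableSpace Ω} (hm : m ≤ mΩ)
    {g T : Ω → ℝ} (hg : StronglyMeasurable[m] g) (hT : Integrable T μ)
    (hgT : Integrable (fun ω => g ω * (T ω - (μ[T|m]) ω)) μ) :
    ∫ ω, g ω * (T ω - (μ[T|m]) ω) ∂μ = 0 := by
  have hTm : Integrable (fun ω => T ω - (μ[T|m]) ω) μ := hT.sub integrable_condExp
  have h1 : μ[(fun ω => g ω * (T ω - (μ[T|m]) ω))|m]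
      =ᵐ[μ] g * μ[(fun ω => T ω - (μ[T|m]) ω)|m] :=
    condExp_mul_of_stronglyMeasurable_left hg hgT hTm
  have h2 : μ[(fun ω => T ω - (μ[T|m]) ω)|m] =ᵐ[μ] 0 := by
    refine (condExp_sub hT integrable_condExp m).trans ?_
    have h3 := condExp_condExp_of_le (le_refl m) hm (f := T) (μ := μ)
    filter_upwards [h3] with ω hω
    simp only [Pi.sub_apply, Pi.zero_apply, hω, sub_self]
  have h3 : μ[(fun ω => g ω * (T ω - (μ[T|m]) ω))|m] =ᵐ[μ] 0 := by
    filter_upwards [h1, h2] with ω hω1 hω2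
    simp only [Pi.mul_apply, Pi.zero_apply] at *
    rw [hω1, hω2, mul_zero]
  rw [← integral_condExp hm, integral_congr_ae h3]; simp

/-- Double robustness of the DONUT population estimand under a homogeneous
treatment effect: with `π₀ = E[T|X]`, `E[Y|X,T] = T f₀(X,1) + (1-T) f₀(X,0)`,
`f₀(x,1) - f₀(x,0) = ψ₀`, and `E[π₀(1-π̂)] ≠ 0`,
`E[(T-π̂)(Y-f̂)]/E[T(T-π̂)] = ψ₀ + E[(π₀-π̂)(f₀(X,0)-f̂)]/E[π₀(1-π̂)]`;
in particular the estimand equals `ψ₀` if `π̂ = π₀` or `f̂ = f₀(·,0)`. -/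
theorem stmt5 {Ω : Type*} {mΩ : MeasurableSpace Ω} (μ : Measure Ω)
    [IsProbabilityMeasure μ] (m m' : MeasurableSpace Ω)
    (hmm' : m ≤ m') (hm' : m' ≤ mΩ)
    (Y T f00 f01 πhat fhat : Ω → ℝ) (ψ0 : ℝ)
    (hT : ∀ ω, T ω = 0 ∨ T ω = 1)
    (hTmeas : Measurable[m'] T)
    (hf00 : Measurable[m] f00) (hf01 : Measurable[m] f01)
    (hπhat : Measurable[m] πhat) (hfhat : Measurable[m] fhat)
    (hπhatbd : ∃ C, ∀ ω, |πhat ω| ≤ C) (hfhatbd : ∃ C, ∀ ω, |fhat ω| ≤ C)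
    (hYint : Integrable Y μ)
    (hY : μ[Y|m'] =ᵐ[μ] fun ω => T ω * f01 ω + (1 - T ω) * f00 ω)
    (hhom : ∀ ω, f01 ω - f00 ω = ψ0)
    (hint1 : Integrable (fun ω => (T ω - πhat ω) * (Y ω - fhat ω)) μ)
    (hint2 : Integrable (fun ω => ((μ[T|m]) ω - πhat ω) * (f00 ω - fhat ω)) μ)
    (hint3 : Integrable (fun ω => (μ[T|m]) ω * (1 - πhat ω)) μ)
    (hden : ∫ ω, (μ[T|m]) ω * (1 - πhat ω) ∂μ ≠ 0) :
    ((∫ ω, (T ω - πhat ω) * (Y ω - fhat ω) ∂μ)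
        / (∫ ω, T ω * (T ω - πhat ω) ∂μ)
      = ψ0 + (∫ ω, ((μ[T|m]) ω - πhat ω) * (f00 ω - fhat ω) ∂μ)
          / (∫ ω, (μ[T|m]) ω * (1 - πhat ω) ∂μ)) ∧
    ((πhat =ᵐ[μ] μ[T|m] ∨ fhat =ᵐ[μ] f00) →
      (∫ ω, (T ω - πhat ω) * (Y ω - fhat ω) ∂μ)
        / (∫ ω, T ω * (T ω - πhat ω) ∂μ) = ψ0) := by
  obtain ⟨Cπ, hCπ⟩ := hπhatbd
  obtain ⟨Cf, hCf⟩ := hfhatbd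
  have hm : m ≤ mΩ := hmm'.trans hm'
  have hTbd : ∀ ω, |T ω| ≤ 1 := by intro ω; rcases hT ω with h | h <;> simp [h]
  have hTmeas0 : Measurable[mΩ] T := fun s hs => hm' _ (hTmeas hs)
  have hπhat0 : Measurable[mΩ] πhat := fun s hs => hm _ (hπhat hs)
  have hfhat0 : Measurable[mΩ] fhat := fun s hs => hm _ (hfhat hs)
  have hTint : Integrable T μ :=
    (integrable_const (1 : ℝ)).mono' hTmeas0.aestronglyMeasurable (ae_of_all _ hTbd)
  have hfhat_int : Integrable fhat μ :=
    (integrable_const Cf).mono' hfhat0.aestronglyMeasurable (ae_of_all _ hCf)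
  -- bound for 1 - πhat
  have h1π_bd : ∀ ω, |1 - πhat ω| ≤ 1 + Cπ := by
    intro ω
    have h1 := abs_le.mp (hCπ ω)
    exact abs_le.mpr ⟨by linarith, by linarith⟩
  have hT1π_int : Integrable (fun ω => T ω * (1 - πhat ω)) μ := by
    refine (integrable_const (1 + Cπ)).mono'
      ((hTmeas0.mul (measurable_const.sub hπhat0))).aestronglyMeasurable (ae_of_all _ ?_)
    intro ω
    calc ‖T ω * (1 - πhat ω)‖ = |T ω| * |1 - πhat ω| := abs_mul _ _
      _ ≤ 1 * (1 + Cπ) := by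
          exact mul_le_mul (hTbd ω) (h1π_bd ω) (abs_nonneg _) zero_le_one
      _ = 1 + Cπ := one_mul _
  -- Denominator: ∫ T (T - πhat) = ∫ π₀ (1 - πhat)
  have hDeq1 : (fun ω => T ω * (T ω - πhat ω)) = fun ω => T ω * (1 - πhat ω) := by
    funext ω; rcases hT ω with h | h <;> simp [h]
  have hDz_int : Integrable (fun ω => (1 - πhat ω) * (T ω - (μ[T|m]) ω)) μ :=
    Integrable.bdd_mul (hTint.sub integrable_condExp)
      (measurable_const.sub hπhat0).aestronglyMeasurable (c := 1 + Cπ) (ae_of_all _ h1π_bd)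
  have hDzero : ∫ ω, (1 - πhat ω) * (T ω - (μ[T|m]) ω) ∂μ = 0 :=
    zero_integral hm (stronglyMeasurable_const.sub hπhat.stronglyMeasurable) hTint hDz_int
  have hD : ∫ ω, T ω * (T ω - πhat ω) ∂μ = ∫ ω, (μ[T|m]) ω * (1 - πhat ω) ∂μ := by
    rw [hDeq1]
    have hsplit : (fun ω => T ω * (1 - πhat ω))
        = fun ω => (μ[T|m]) ω * (1 - πhat ω) + (1 - πhat ω) * (T ω - (μ[T|m]) ω) :=
      funext fun ω => by ring
    rw [hsplit, integral_add hint3 hDz_int, hDzero, add_zero]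
  -- Numerator step 1: condition on m'
  have hTπ_sm : StronglyMeasurable[m'] (fun ω => T ω - πhat ω) :=
    hTmeas.stronglyMeasurable.sub (show Measurable[m'] πhat from fun s hs => hmm' _ (hπhat hs)).stronglyMeasurable
  have hYf_int : Integrable (fun ω => Y ω - fhat ω) μ := hYint.sub hfhat_int
  have hpull : μ[(fun ω => (T ω - πhat ω) * (Y ω - fhat ω))|m']
      =ᵐ[μ] (fun ω => T ω - πhat ω) * μ[(fun ω => Y ω - fhat ω)|m'] :=
    condExp_mul_of_stronglyMeasurable_left hTπ_sm hint1 hYf_int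
  have hfhat_ce : μ[fhat|m'] = fhat :=
    condExp_of_stronglyMeasurable hm' (show Measurable[m'] fhat from fun s hs => hmm' _ (hfhat hs)).stronglyMeasurable hfhat_int
  have hceYf : μ[(fun ω => Y ω - fhat ω)|m']
      =ᵐ[μ] fun ω => (T ω * f01 ω + (1 - T ω) * f00 ω) - fhat ω := by
    refine (condExp_sub hYint hfhat_int m').trans ?_
    filter_upwards [hY] with ω hω
    simp only [Pi.sub_apply, hfhat_ce, hω]
  have hEq : μ[(fun ω => (T ω - πhat ω) * (Y ω - fhat ω))|m']
      =ᵐ[μ] fun ω => (T ω - πhat ω) * ((T ω * f01 ω + (1 - T ω) * f00 ω) - fhat ω) := by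
    refine hpull.trans ?_
    filter_upwards [hceYf] with ω hω
    simp only [Pi.mul_apply, hω]
  have hFint : Integrable
      (fun ω => (T ω - πhat ω) * ((T ω * f01 ω + (1 - T ω) * f00 ω) - fhat ω)) μ :=
    integrable_condExp.congr hEq
  have hNum1 : ∫ ω, (T ω - πhat ω) * (Y ω - fhat ω) ∂μ
      = ∫ ω, (T ω - πhat ω) * ((T ω * f01 ω + (1 - T ω) * f00 ω) - fhat ω) ∂μ := by
    rw [← integral_condExp hm', integral_congr_ae hEq]
  -- pointwise identity using T ∈ {0,1} and homogeneity
  have hpt : ∀ ω, (T ω - πhat ω) * ((T ω * f01 ω + (1 - T ω) * f00 ω) - fhat ω)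
      = (T ω - πhat ω) * (f00 ω - fhat ω) + ψ0 * (T ω * (1 - πhat ω)) := by
    intro ω
    rw [show f01 ω = f00 ω + ψ0 by linarith [hhom ω]]
    rcases hT ω with h | h <;> rw [h] <;> ring
  have hint4 : Integrable (fun ω => (T ω - πhat ω) * (f00 ω - fhat ω)) μ := by
    refine (hFint.sub (hT1π_int.const_mul ψ0)).congr (ae_of_all _ fun ω => ?_)
    simp only [Pi.sub_apply]
    linarith [hpt ω]
  have hint5 : Integrable (fun ω => (f00 ω - fhat ω) * (T ω - (μ[T|m]) ω)) μ := by
    refine (hint4.sub hint2).congr (ae_of_all _ fun ω => ?_)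
    simp only [Pi.sub_apply]
    ring
  have hzero2 : ∫ ω, (f00 ω - fhat ω) * (T ω - (μ[T|m]) ω) ∂μ = 0 :=
    zero_integral hm (hf00.stronglyMeasurable.sub hfhat.stronglyMeasurable) hTint hint5
  have hNum : ∫ ω, (T ω - πhat ω) * (Y ω - fhat ω) ∂μ
      = (∫ ω, ((μ[T|m]) ω - πhat ω) * (f00 ω - fhat ω) ∂μ)
        + ψ0 * ∫ ω, (μ[T|m]) ω * (1 - πhat ω) ∂μ := by
    rw [hNum1]
    have hsplit : (fun ω => (T ω - πhat ω) * ((T ω * f01 ω + (1 - T ω) * f00 ω) - fhat ω))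
        = fun ω => (((μ[T|m]) ω - πhat ω) * (f00 ω - fhat ω)
            + (f00 ω - fhat ω) * (T ω - (μ[T|m]) ω)) + ψ0 * (T ω * (1 - πhat ω)) :=
      funext fun ω => by rw [hpt ω]; ring
    have h12 : Integrable (fun ω => ((μ[T|m]) ω - πhat ω) * (f00 ω - fhat ω)
        + (f00 ω - fhat ω) * (T ω - (μ[T|m]) ω)) μ := hint2.add hint5
    rw [hsplit, integral_add h12 (hT1π_int.const_mul ψ0),
      integral_add hint2 hint5, hzero2, add_zero, integral_const_mul]
    congr 1
    have hsplit2 : (fun ω => T ω * (1 - πhat ω))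
        = fun ω => (μ[T|m]) ω * (1 - πhat ω) + (1 - πhat ω) * (T ω - (μ[T|m]) ω) :=
      funext fun ω => by ring
    rw [hsplit2, integral_add hint3 hDz_int, hDzero, add_zero]
  constructor
  · rw [hNum, hD]
    field_simp
    ring
  · intro hcase
    have hN2 : ∫ ω, ((μ[T|m]) ω - πhat ω) * (f00 ω - fhat ω) ∂μ = 0 := by
      rcases hcase with hc | hc
      · refine integral_eq_zero_of_ae ?_
        filter_upwards [hc] with ω hω
        simp [hω]
      · refine integral_eq_zero_of_ae ?_
        filter_upwards [hc] with ω hω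
        simp [hω]
    rw [hNum, hD, hN2, zero_add, mul_div_assoc, div_self hden, mul_one]
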